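/- Let F be a field, n ≥ 2, q ∈ F a primitive n-th root of unity, and s, a ∈ F, and let 𝓔 = (E(s), σ, a) be the F-algebra generated by h and x subject to x·h = q·h·x, h^n = s, x^n = a. Then: (i) if s ≠ 0 and a = 0, the Jacobson radical of 𝓔 is the two-sided ideal generated by x, and 𝓔 modulo its Jacobson radical is isomorphic as an F-algebra to F[X]/(X^n − s); (ii) if s = 0 and a ≠ 0, the Jacobson radical of 𝓔 is the two-sided ideal generated by h, and 𝓔 modulo its Jacobson radical is isomorphic to F[X]/(X^n − a); (iii) if s = 0 and a = 0, the Jacobson radical of 𝓔 is the two-sided ideal generated by x and h, and 𝓔 modulo its Jacobson radical is isomorphic to F. -/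

import Mathlib

open Polynomial

/-- The defining relations of the algebra `𝓔 = (E(s), σ, a)`: it is generated over `F` by
`h` (the generator `ι F 0`) and `x` (the generator `ι F 1`) subject to
`x·h = q·h·x`, `h^n = s`, `x^n = a`. -/
inductive CERel (F : Type) [Field F] (n : ℕ) (q s a : F) :
    FreeAlgebra F (Fin 2) → FreeAlgebra F (Fin 2) → Prop
  | comm : CERel F n q s a (FreeAlgebra.ι F (1 : Fin 2) * FreeAlgebra.ι F (0 : Fin 2))
      (algebraMap F (FreeAlgebra F (Fin 2)) q *
        (FreeAlgebra.ι F (0 : Fin 2) * FreeAlgebra.ι F (1 : Fin 2)))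
  | hpow : CERel F n q s a (FreeAlgebra.ι F (0 : Fin 2) ^ n)
      (algebraMap F (FreeAlgebra F (Fin 2)) s)
  | xpow : CERel F n q s a (FreeAlgebra.ι F (1 : Fin 2) ^ n)
      (algebraMap F (FreeAlgebra F (Fin 2)) a)

/-- The algebra `𝓔 = (E(s), σ, a)`. -/
abbrev CE (F : Type) [Field F] (n : ℕ) (q s a : F) : Type := RingQuot (CERel F n q s a)

/-- The image of the generator `h` in `𝓔`. -/
noncomputable def CEh (F : Type) [Field F] (n : ℕ) (q s a : F) : CE F n q s a :=
  RingQuot.mkAlgHom F (CERel F n q s a) (FreeAlgebra.ι F (0 : Fin 2))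

/-- The image of the generator `x` in `𝓔`. -/
noncomputable def CEx (F : Type) [Field F] (n : ℕ) (q s a : F) : CE F n q s a :=
  RingQuot.mkAlgHom F (CERel F n q s a) (FreeAlgebra.ι F (1 : Fin 2))

/-- The Jacobson radical of a ring `R`, as a set: the intersection of the annihilators of all
simple left `R`-modules. -/
def jacobsonRadicalSet (R : Type) [Ring R] : Set R :=
  {r : R | ∀ (M : Type) (_ : AddCommGroup M) (_ : Module R M),
    IsSimpleModule R M → ∀ m : M, r • m = 0}

/-!
The generator `x` is normal in `𝓔` (`x·h = (q·h)·x`), and so is `h` because `q ≠ 0`. A normal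
nilpotent element `z` kills every simple module `M`: normality makes `{m | z·m = 0}` a submodule,
and it is nonzero because `z^n = 0`. So the ideal generated by the nilpotent generators lies in the
radical. Conversely, killing those generators maps `𝓔` onto `F[X]/(X^n − b)` or `F`, which is
semisimple (`X^n − b` is separable since `n ≠ 0` in `F` and `b ≠ 0`), so the radical lies in the
kernel of that map; and the kernel is exactly the ideal, since modulo the ideal every element of
`𝓔` is a polynomial in the remaining generator.
-/

section JacobsonRadical

variable {R : Type} [Ring R]

theorem jacobsonRadicalSet_subset_jacobson : jacobsonRadicalSet R ⊆ Ring.jacobson R := by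
  intro r hr
  rw [SetLike.mem_coe, Ring.jacobson_eq_sInf_isMaximal, Submodule.mem_sInf]
  intro m hm
  have : IsSimpleModule R (R ⧸ m) := isSimpleModule_iff_isCoatom.mpr (Ideal.isMaximal_def.mp hm)
  have h := hr (R ⧸ m) _ _ this (Submodule.Quotient.mk 1)
  rwa [← Submodule.Quotient.mk_smul, smul_eq_mul, mul_one, Submodule.Quotient.mk_eq_zero] at h

theorem smul_eq_zero_of_isNilpotent_of_forall_mul_eq_mul {M : Type} [AddCommGroup M] [Module R M]
    [IsSimpleModule R M] {z : R} (hz : IsNilpotent z) (hnormal : ∀ r, ∃ r', z * r = r' * z)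
    (m : M) : z • m = 0 := by
  let N : Submodule R M :=
    { carrier := {m | z • m = 0}
      add_mem' := fun h1 h2 => by simp_all [smul_add]
      zero_mem' := smul_zero z
      smul_mem' := fun r m hm => by
        obtain ⟨r', hr'⟩ := hnormal r
        change z • r • m = 0
        rw [← mul_smul, hr', mul_smul, hm, smul_zero] }
  rcases IsSimpleOrder.eq_bot_or_eq_top N with hbot | htop
  · obtain ⟨k, hk⟩ := hz
    have hinj : Function.Injective (z • · : M → M) := fun m₁ m₂ h => by
      have : m₁ - m₂ ∈ N := by simp [N, smul_sub, h]
      simpa [hbot, sub_eq_zero] using this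
    have hinj_pow : Function.Injective (z ^ k • · : M → M) := by
      rw [← smul_iterate]
      exact hinj.iterate k
    simp only [hk, zero_smul] at hinj_pow
    have := IsSimpleModule.nontrivial R M
    obtain ⟨m₀, hm₀⟩ := exists_ne (0 : M)
    exact (hm₀ (hinj_pow rfl)).elim
  · have : m ∈ N := htop ▸ Submodule.mem_top
    exact this

theorem TwoSidedIdeal.span_subset_jacobsonRadicalSet {T : Set R}
    (hT : ∀ z ∈ T, IsNilpotent z ∧ ∀ r, ∃ r', z * r = r' * z) :
    (TwoSidedIdeal.span T : Set R) ⊆ jacobsonRadicalSet R := by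
  intro r hr M _ _ _ m
  have hker : TwoSidedIdeal.span T ≤ TwoSidedIdeal.ker (Module.toAddMonoidEnd R M) :=
    TwoSidedIdeal.span_le.mpr fun z hz => (TwoSidedIdeal.mem_ker _).mpr <| AddMonoidHom.ext
      fun m => smul_eq_zero_of_isNilpotent_of_forall_mul_eq_mul (hT z hz).1 (hT z hz).2 m
  exact DFunLike.congr_fun ((TwoSidedIdeal.mem_ker _).mp (hker hr)) m

theorem jacobsonRadicalSet_eq_span_of_ker_eq_span {F S : Type} [Field F] [Algebra F R] [Ring S]
    [Algebra F S] [IsSemisimpleRing S] (f : R →ₐ[F] S) (hf : Function.Surjective f) {T : Set R}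
    (hT : ∀ z ∈ T, IsNilpotent z ∧ ∀ r, ∃ r', z * r = r' * z)
    (hker : ∀ r, f r = 0 ↔ r ∈ TwoSidedIdeal.span T) :
    jacobsonRadicalSet R = TwoSidedIdeal.span T ∧
      ∃ g : R →ₐ[F] S, Function.Surjective g ∧
        ∀ r, g r = 0 ↔ r ∈ jacobsonRadicalSet R := by
  have : RingHomSurjective (f : R →+* S) := ⟨hf⟩
  have hrad : jacobsonRadicalSet R ⊆ TwoSidedIdeal.span T := fun r hr => by
    have hr' : f r ∈ Ring.jacobson S :=
      Ring.le_comap_jacobson (f : R →+* S) (jacobsonRadicalSet_subset_jacobson hr)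
    rw [IsSemisimpleRing.jacobson_eq_bot, Ideal.mem_bot] at hr'
    exact (hker r).mp hr'
  have heq := hrad.antisymm (TwoSidedIdeal.span_subset_jacobsonRadicalSet hT)
  exact ⟨heq, f, hf, fun r => heq ▸ hker r⟩

end JacobsonRadical

theorem AdjoinRoot.isSemisimpleRing_of_squarefree {K : Type*} [Field K] {p : K[X]}
    (hp : Squarefree p) : IsSemisimpleRing (AdjoinRoot p) :=
  have : IsReduced (AdjoinRoot p) :=
    (Ideal.isRadical_iff_quotient_reduced _).mp (isRadical_iff_span_singleton.mp hp.isRadical)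
  have : FiniteDimensional K (AdjoinRoot p) := (AdjoinRoot.powerBasis hp.ne_zero).finite
  have : IsArtinianRing (AdjoinRoot p) := .of_finite K _
  IsArtinianRing.isSemisimpleRing_of_isReduced _

theorem AdjoinRoot.aeval_eq_zero_of_mk_eq_zero {R A : Type*} [CommRing R] [Semiring A]
    [Algebra R A] {g p : R[X]} {y : A} (hy : aeval y g = 0) (hp : AdjoinRoot.mk g p = 0) :
    aeval y p = 0 := by
  obtain ⟨t, rfl⟩ := AdjoinRoot.mk_eq_zero.mp hp
  rw [map_mul, hy, zero_mul]

theorem AdjoinRoot.map_aeval_eq_mk {R A : Type*} [CommRing R] [Semiring A] [Algebra R A]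
    {g : R[X]} (f : A →ₐ[R] AdjoinRoot g) {y : A} (hy : f y = AdjoinRoot.root g) (p : R[X]) :
    f (aeval y p) = AdjoinRoot.mk g p := by
  rw [← aeval_algHom_apply, hy, AdjoinRoot.aeval_eq]

theorem AdjoinRoot.root_X_pow_sub_C_pow {K : Type*} [Field K] {n : ℕ} (b : K) :
    AdjoinRoot.root (X ^ n - C b) ^ n = algebraMap K (AdjoinRoot (X ^ n - C b)) b := by
  have h := AdjoinRoot.mk_self (f := X ^ n - C b)
  rwa [map_sub, map_pow, AdjoinRoot.mk_X, AdjoinRoot.mk_C, sub_eq_zero] at h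

section CE

variable {F : Type} [Field F] {n : ℕ} {q s a : F}

theorem CEx_mul_CEh :
    CEx F n q s a * CEh F n q s a = algebraMap F _ q * (CEh F n q s a * CEx F n q s a) := by
  simpa [CEh, CEx] using RingQuot.mkAlgHom_rel F (@CERel.comm F _ n q s a)

theorem CEh_pow : CEh F n q s a ^ n = algebraMap F _ s := by
  simpa [CEh] using RingQuot.mkAlgHom_rel F (@CERel.hpow F _ n q s a)

theorem CEx_pow : CEx F n q s a ^ n = algebraMap F _ a := by
  simpa [CEx] using RingQuot.mkAlgHom_rel F (@CERel.xpow F _ n q s a)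

@[elab_as_elim]
theorem CE.induction {P : CE F n q s a → Prop} (algebraMap : ∀ c, P (algebraMap F _ c))
    (h : P (CEh F n q s a)) (x : P (CEx F n q s a)) (add : ∀ u v, P u → P v → P (u + v))
    (mul : ∀ u v, P u → P v → P (u * v)) (e : CE F n q s a) : P e := by
  obtain ⟨w, rfl⟩ := RingQuot.mkAlgHom_surjective F _ e
  induction w using FreeAlgebra.induction with
  | grade0 c => simpa using algebraMap c
  | grade1 i => fin_cases i; exacts [h, x]
  | mul w₁ w₂ h₁ h₂ => simpa using mul _ _ h₁ h₂
  | add w₁ w₂ h₁ h₂ => simpa using add _ _ h₁ h₂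

theorem CE.forall_mul_eq_mul {z : CE F n q s a} (hh : ∃ c, z * CEh F n q s a = c * z)
    (hx : ∃ c, z * CEx F n q s a = c * z) (e : CE F n q s a) : ∃ e', z * e = e' * z := by
  induction e using CE.induction with
  | algebraMap c => exact ⟨algebraMap F _ c, Algebra.commutes c z |>.symm⟩
  | h => exact hh
  | x => exact hx
  | add u v hu hv =>
    obtain ⟨u', hu'⟩ := hu
    obtain ⟨v', hv'⟩ := hv
    exact ⟨u' + v', by rw [mul_add, hu', hv', add_mul]⟩
  | mul u v hu hv =>
    obtain ⟨u', hu'⟩ := hu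
    obtain ⟨v', hv'⟩ := hv
    exact ⟨u' * v', by rw [← mul_assoc, hu', mul_assoc, hv', mul_assoc]⟩

theorem CEx_mul_eq_mul (e : CE F n q s a) : ∃ e', CEx F n q s a * e = e' * CEx F n q s a :=
  CE.forall_mul_eq_mul ⟨_, by rw [CEx_mul_CEh, mul_assoc]⟩ ⟨_, rfl⟩ e

theorem CEh_mul_eq_mul (hq : q ≠ 0) (e : CE F n q s a) :
    ∃ e', CEh F n q s a * e = e' * CEh F n q s a := by
  refine CE.forall_mul_eq_mul ⟨_, rfl⟩ ⟨algebraMap F _ q⁻¹ * CEx F n q s a, ?_⟩ e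
  rw [mul_assoc, CEx_mul_CEh, ← mul_assoc, ← map_mul, inv_mul_cancel₀ hq, map_one, one_mul]

theorem CE.exists_eq_aeval_add {z : CE F n q s a} {T : Set (CE F n q s a)}
    (hh : CEh F n q s a = z ∨ CEh F n q s a ∈ TwoSidedIdeal.span T)
    (hx : CEx F n q s a = z ∨ CEx F n q s a ∈ TwoSidedIdeal.span T) (e : CE F n q s a) :
    ∃ (p : F[X]) (v : CE F n q s a), v ∈ TwoSidedIdeal.span T ∧ e = aeval z p + v := by
  have generator {y : CE F n q s a} (hy : y = z ∨ y ∈ TwoSidedIdeal.span T) :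
      ∃ (p : F[X]) (v : CE F n q s a), v ∈ TwoSidedIdeal.span T ∧ y = aeval z p + v := by
    rcases hy with rfl | hy
    exacts [⟨X, 0, zero_mem _, by simp⟩, ⟨0, y, hy, by simp⟩]
  induction e using CE.induction with
  | algebraMap c => exact ⟨C c, 0, zero_mem _, by simp⟩
  | h => exact generator hh
  | x => exact generator hx
  | add u v hu hv =>
    obtain ⟨p₁, v₁, hv₁, rfl⟩ := hu
    obtain ⟨p₂, v₂, hv₂, rfl⟩ := hv
    exact ⟨p₁ + p₂, v₁ + v₂, add_mem hv₁ hv₂, by rw [map_add]; abel⟩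
  | mul u v hu hv =>
    obtain ⟨p₁, v₁, hv₁, rfl⟩ := hu
    obtain ⟨p₂, v₂, hv₂, rfl⟩ := hv
    refine ⟨p₁ * p₂, aeval z p₁ * v₂ + v₁ * (aeval z p₂ + v₂), ?_,
      by rw [map_mul]; noncomm_ring⟩
    exact add_mem (TwoSidedIdeal.mul_mem_left _ _ _ hv₂) (TwoSidedIdeal.mul_mem_right _ _ _ hv₁)

theorem CE.ker_eq_span {S : Type} [Ring S] [Algebra F S] (f : CE F n q s a →ₐ[F] S)
    {z : CE F n q s a} {T : Set (CE F n q s a)}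
    (hh : CEh F n q s a = z ∨ CEh F n q s a ∈ TwoSidedIdeal.span T)
    (hx : CEx F n q s a = z ∨ CEx F n q s a ∈ TwoSidedIdeal.span T) (hfT : ∀ t ∈ T, f t = 0)
    (hz : ∀ p : F[X], f (aeval z p) = 0 → aeval z p = 0) (e : CE F n q s a) :
    f e = 0 ↔ e ∈ TwoSidedIdeal.span T := by
  have hle : TwoSidedIdeal.span T ≤ TwoSidedIdeal.ker f :=
    TwoSidedIdeal.span_le.mpr fun t ht => (TwoSidedIdeal.mem_ker _).mpr (hfT t ht)
  refine ⟨fun he => ?_, fun he => (TwoSidedIdeal.mem_ker _).mp (hle he)⟩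
  obtain ⟨p, v, hv, rfl⟩ := CE.exists_eq_aeval_add hh hx e
  rw [map_add, (TwoSidedIdeal.mem_ker _).mp (hle hv), add_zero] at he
  rwa [hz p he, zero_add]

noncomputable def CE.lift {A : Type} [Semiring A] [Algebra F A] (u v : A)
    (hvu : v * u = algebraMap F A q * (u * v)) (hu : u ^ n = algebraMap F A s)
    (hv : v ^ n = algebraMap F A a) : CE F n q s a →ₐ[F] A :=
  RingQuot.liftAlgHom F ⟨FreeAlgebra.lift F ![u, v], fun _ _ r => by cases r <;> simpa⟩

section lift

variable {A : Type} [Semiring A] [Algebra F A] {u v : A}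
  (hvu : v * u = algebraMap F A q * (u * v)) (hu : u ^ n = algebraMap F A s)
  (hv : v ^ n = algebraMap F A a)

@[simp]
theorem CE.lift_CEh : CE.lift u v hvu hu hv (CEh F n q s a) = u := by
  simp [CE.lift, CEh]

@[simp]
theorem CE.lift_CEx : CE.lift u v hvu hu hv (CEx F n q s a) = v := by
  simp [CE.lift, CEx]

end lift

theorem CE.jacobsonRadicalSet_eq_span_CEx (hs : s ≠ 0) (hnF : (n : F) ≠ 0) :
    jacobsonRadicalSet (CE F n q s 0) = TwoSidedIdeal.span {CEx F n q s 0} ∧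
      ∃ f : CE F n q s 0 →ₐ[F] AdjoinRoot (X ^ n - C s), Function.Surjective f ∧
        ∀ r, f r = 0 ↔ r ∈ jacobsonRadicalSet (CE F n q s 0) := by
  have hn : n ≠ 0 := by rintro rfl; simp at hnF
  have := AdjoinRoot.isSemisimpleRing_of_squarefree (separable_X_pow_sub_C s hnF hs).squarefree
  let f : CE F n q s 0 →ₐ[F] AdjoinRoot (X ^ n - C s) :=
    CE.lift (AdjoinRoot.root _) 0 (by simp) (AdjoinRoot.root_X_pow_sub_C_pow s)
      (by simp [zero_pow hn])
  have hf := AdjoinRoot.map_aeval_eq_mk f (y := CEh F n q s 0) (CE.lift_CEh ..)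
  refine jacobsonRadicalSet_eq_span_of_ker_eq_span f ?_ ?_ ?_
  · intro y
    obtain ⟨p, rfl⟩ := AdjoinRoot.mk_surjective y
    exact ⟨_, hf p⟩
  · rintro z rfl
    exact ⟨⟨n, by rw [CEx_pow, map_zero]⟩, CEx_mul_eq_mul⟩
  · refine CE.ker_eq_span f (Or.inl rfl) (Or.inr (TwoSidedIdeal.subset_span rfl)) ?_ ?_
    · rintro t rfl
      exact CE.lift_CEx ..
    · intro p hp
      refine AdjoinRoot.aeval_eq_zero_of_mk_eq_zero ?_ (hf p ▸ hp)
      simp [CEh_pow]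

theorem CE.jacobsonRadicalSet_eq_span_CEh (ha : a ≠ 0) (hq : q ≠ 0) (hnF : (n : F) ≠ 0) :
    jacobsonRadicalSet (CE F n q 0 a) = TwoSidedIdeal.span {CEh F n q 0 a} ∧
      ∃ f : CE F n q 0 a →ₐ[F] AdjoinRoot (X ^ n - C a), Function.Surjective f ∧
        ∀ r, f r = 0 ↔ r ∈ jacobsonRadicalSet (CE F n q 0 a) := by
  have hn : n ≠ 0 := by rintro rfl; simp at hnF
  have := AdjoinRoot.isSemisimpleRing_of_squarefree (separable_X_pow_sub_C a hnF ha).squarefree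
  let f : CE F n q 0 a →ₐ[F] AdjoinRoot (X ^ n - C a) :=
    CE.lift 0 (AdjoinRoot.root _) (by simp) (by simp [zero_pow hn])
      (AdjoinRoot.root_X_pow_sub_C_pow a)
  have hf := AdjoinRoot.map_aeval_eq_mk f (y := CEx F n q 0 a) (CE.lift_CEx ..)
  refine jacobsonRadicalSet_eq_span_of_ker_eq_span f ?_ ?_ ?_
  · intro y
    obtain ⟨p, rfl⟩ := AdjoinRoot.mk_surjective y
    exact ⟨_, hf p⟩
  · rintro z rfl
    exact ⟨⟨n, by rw [CEh_pow, map_zero]⟩, CEh_mul_eq_mul hq⟩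
  · refine CE.ker_eq_span f (Or.inr (TwoSidedIdeal.subset_span rfl)) (Or.inl rfl) ?_ ?_
    · rintro t rfl
      exact CE.lift_CEh ..
    · intro p hp
      refine AdjoinRoot.aeval_eq_zero_of_mk_eq_zero ?_ (hf p ▸ hp)
      simp [CEx_pow]

theorem CE.jacobsonRadicalSet_eq_span_CEx_CEh (hq : q ≠ 0) (hn : n ≠ 0) :
    jacobsonRadicalSet (CE F n q 0 0) = TwoSidedIdeal.span {CEx F n q 0 0, CEh F n q 0 0} ∧
      ∃ f : CE F n q 0 0 →ₐ[F] F, Function.Surjective f ∧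
        ∀ r, f r = 0 ↔ r ∈ jacobsonRadicalSet (CE F n q 0 0) := by
  let f : CE F n q 0 0 →ₐ[F] F :=
    CE.lift 0 0 (by simp) (by simp [zero_pow hn]) (by simp [zero_pow hn])
  refine jacobsonRadicalSet_eq_span_of_ker_eq_span f
    (fun c => ⟨algebraMap F _ c, by simp⟩) ?_ ?_
  · rintro z (rfl | rfl)
    · exact ⟨⟨n, by rw [CEx_pow, map_zero]⟩, CEx_mul_eq_mul⟩
    · exact ⟨⟨n, by rw [CEh_pow, map_zero]⟩, CEh_mul_eq_mul hq⟩
  -- modulo `⟨x, h⟩` every element is a scalar, i.e. a polynomial in `0`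
  · refine CE.ker_eq_span f (z := 0) (Or.inr (TwoSidedIdeal.subset_span (by simp)))
      (Or.inr (TwoSidedIdeal.subset_span (by simp))) ?_ fun p hp => ?_
    · rintro t (rfl | rfl) <;> simp [f]
    · rw [← map_zero (algebraMap F (CE F n q 0 0)), aeval_algebraMap_apply] at hp ⊢
      rw [AlgHom.commutes, Algebra.algebraMap_self, RingHom.id_apply] at hp
      rw [hp, map_zero]

end CE

/-- With `𝓔 = (E(s), σ, a)` as above:
(i) if `s ≠ 0` and `a = 0`, the Jacobson radical of `𝓔` is the two-sided ideal generated by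
`x`, and `𝓔` modulo its Jacobson radical is `F`-algebra isomorphic to `F[X]/(X^n − s)`
(expressed via a surjective `F`-algebra homomorphism whose kernel is the radical);
(ii) if `s = 0` and `a ≠ 0`, the Jacobson radical is the two-sided ideal generated by `h` and
the quotient is isomorphic to `F[X]/(X^n − a)`;
(iii) if `s = 0` and `a = 0`, the Jacobson radical is the two-sided ideal generated by `x` and
`h`, and the quotient is isomorphic to `F`. -/
theorem stmt_3 (F : Type) [Field F] (n : ℕ) (hn : 2 ≤ n) (q : F)
    (hq : IsPrimitiveRoot q n) (s a : F) :
    (s ≠ 0 → a = 0 →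
      jacobsonRadicalSet (CE F n q s a) =
        ((TwoSidedIdeal.span {CEx F n q s a} : TwoSidedIdeal (CE F n q s a)) :
          Set (CE F n q s a)) ∧
      ∃ f : CE F n q s a →ₐ[F] AdjoinRoot (X ^ n - C s : F[X]),
        Function.Surjective f ∧
        ∀ r : CE F n q s a, f r = 0 ↔ r ∈ jacobsonRadicalSet (CE F n q s a)) ∧
    (s = 0 → a ≠ 0 →
      jacobsonRadicalSet (CE F n q s a) =
        ((TwoSidedIdeal.span {CEh F n q s a} : TwoSidedIdeal (CE F n q s a)) :
          Set (CE F n q s a)) ∧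
      ∃ f : CE F n q s a →ₐ[F] AdjoinRoot (X ^ n - C a : F[X]),
        Function.Surjective f ∧
        ∀ r : CE F n q s a, f r = 0 ↔ r ∈ jacobsonRadicalSet (CE F n q s a)) ∧
    (s = 0 → a = 0 →
      jacobsonRadicalSet (CE F n q s a) =
        ((TwoSidedIdeal.span {CEx F n q s a, CEh F n q s a} :
          TwoSidedIdeal (CE F n q s a)) : Set (CE F n q s a)) ∧
      ∃ f : CE F n q s a →ₐ[F] F,
        Function.Surjective f ∧
        ∀ r : CE F n q s a, f r = 0 ↔ r ∈ jacobsonRadicalSet (CE F n q s a)) := by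
  have hn0 : n ≠ 0 := by omega
  have : NeZero n := ⟨hn0⟩
  have hnF : (n : F) ≠ 0 := hq.neZero'.out
  have hq0 : q ≠ 0 := hq.ne_zero hn0
  refine ⟨fun hs ha => ?_, fun hs ha => ?_, fun hs ha => ?_⟩ <;> subst_vars
  · exact CE.jacobsonRadicalSet_eq_span_CEx hs hnF
  · exact CE.jacobsonRadicalSet_eq_span_CEh ha hq0 hnF
  · exact CE.jacobsonRadicalSet_eq_span_CEx_CEh hq0 hn0
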